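/- Let q ∈ [0,1] and define η_t = (2/(t+2))^q for integers t ≥ 0. Then for every integer T ≥ 1: Π_{t=0}^{T−1} (1 − η_{t+1}) ≤ η_T. -/

import Mathlib

/-!
Since `0 < 2/(t+3) ≤ 1` and `q ≤ 1`, each factor satisfies `0 ≤ 1 - (2/(t+3))^q ≤ 1 - 2/(t+3)`,
so the product is at most `∏ (t+1)/(t+3) = 2/((T+1)(T+2))` by telescoping. This is at most
`2/(T+2) ≤ (2/(T+2))^q`.
-/

open Finset

lemma prod_range_one_sub_two_div (n : ℕ) :
    ∏ t ∈ range n, (1 - 2 / ((t : ℝ) + 3)) = 2 / (((n : ℝ) + 1) * ((n : ℝ) + 2)) := by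
  induction n with
  | zero => norm_num
  | succ m ih =>
    rw [prod_range_succ, ih]
    push_cast
    field_simp
    ring

lemma two_div_nat_add_le_one (t : ℕ) {a : ℝ} (ha : 2 ≤ a) : 2 / ((t : ℝ) + a) ≤ 1 :=
  div_le_one_of_le₀ (by linarith [t.cast_nonneg (α := ℝ)]) (by positivity)

theorem stmt_7 (q : ℝ) (hq0 : 0 ≤ q) (hq1 : q ≤ 1) (T : ℕ) :
    ∏ t ∈ range T, (1 - (2 / ((t : ℝ) + 3)) ^ q) ≤ (2 / ((T : ℝ) + 2)) ^ q := by
  have hfactor : ∀ t ∈ range T,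
      0 ≤ 1 - (2 / ((t : ℝ) + 3)) ^ q ∧ 1 - (2 / ((t : ℝ) + 3)) ^ q ≤ 1 - 2 / ((t : ℝ) + 3) := by
    intro t _
    have hle := two_div_nat_add_le_one t (a := 3) (by norm_num)
    exact ⟨sub_nonneg.2 (Real.rpow_le_one (by positivity) hle hq0),
      sub_le_sub_left (Real.self_le_rpow_of_le_one (by positivity) hle hq1) 1⟩
  calc ∏ t ∈ range T, (1 - (2 / ((t : ℝ) + 3)) ^ q)
      ≤ ∏ t ∈ range T, (1 - 2 / ((t : ℝ) + 3)) :=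
        prod_le_prod (fun t ht ↦ (hfactor t ht).1) (fun t ht ↦ (hfactor t ht).2)
    _ = 2 / (((T : ℝ) + 1) * ((T : ℝ) + 2)) := prod_range_one_sub_two_div T
    _ ≤ 2 / ((T : ℝ) + 2) := by
        gcongr
        exact le_mul_of_one_le_left (by positivity) (by simp)
    _ ≤ (2 / ((T : ℝ) + 2)) ^ q :=
        Real.self_le_rpow_of_le_one (by positivity) (two_div_nat_add_le_one T le_rfl) hq1
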